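/- Let β > 0 and let F : ℂ → ℂ be bounded and continuous on the closed strip S̄_β = {z ∈ ℂ : 0 ≤ Im z ≤ β}, holomorphic on the open strip S_β = {z : 0 < Im z < β}, and satisfy the periodicity condition F(t + iβ) = F(t) for all t ∈ ℝ. Then F is constant on S̄_β. -/

import Mathlib

/-!
Extend `F` to all of `ℂ` by `F (z + β * I) = F z`. Periodicity on the boundary makes the
extension continuous, and it is holomorphic off the lines `Im z ∈ β ℤ`. A continuous function that
is holomorphic off a horizontal line is holomorphic: by Morera it suffices that rectangle
integrals vanish, and a rectangle crossing the line is cut along it into two rectangles whose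
interiors avoid it. So the extension is entire and bounded, hence constant by Liouville.
-/

open Complex Set
open scoped Interval

namespace Complex

variable {E : Type*} [NormedAddCommGroup E] [NormedSpace ℂ E]
  {f : ℂ → E} {U : Set ℂ} {m : ℝ}

theorem wedgeIntegral_add_wedgeIntegral_eq_zero_of_notMem_uIoo {z w : ℂ}
    (hc : ContinuousOn f (Rectangle z w))
    (hd : DifferentiableOn ℂ f (Rectangle z w \ {u | u.im = m}))
    (hm : m ∉ uIoo z.im w.im) :
    wedgeIntegral z w f + wedgeIntegral w z f = 0 := by
  rw [wedgeIntegral_add_wedgeIntegral_eq]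
  refine integral_boundary_rect_eq_zero_of_continuousOn_of_differentiableOn f z w hc
    (hd.mono fun u ⟨hre, him⟩ => ⟨⟨Ioo_subset_Icc_self hre, Ioo_subset_Icc_self him⟩, ?_⟩)
  rintro (rfl : u.im = m)
  exact hm him

theorem wedgeIntegral_add_wedgeIntegral_eq_add_of_mem_uIcc {z w : ℂ}
    (hc : ContinuousOn f (Rectangle z w)) (hm : m ∈ [[z.im, w.im]]) :
    wedgeIntegral z w f + wedgeIntegral w z f =
      (wedgeIntegral z ⟨w.re, m⟩ f + wedgeIntegral ⟨w.re, m⟩ z f) +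
        (wedgeIntegral ⟨z.re, m⟩ w f + wedgeIntegral w ⟨z.re, m⟩ f) := by
  have vertical {x : ℝ} (hx : x ∈ [[z.re, w.re]]) {a b : ℝ} (hab : [[a, b]] ⊆ [[z.im, w.im]]) :
      IntervalIntegrable (fun y : ℝ => f (x + y * I)) MeasureTheory.volume a b :=
    (hc.comp (by fun_prop) fun y hy => ⟨by simpa using hx, by simpa using hab hy⟩)
      |>.intervalIntegrable
  simp only [wedgeIntegral_add_wedgeIntegral_eq]
  rw [← intervalIntegral.integral_add_adjacent_intervals
      (vertical right_mem_uIcc (uIcc_subset_uIcc left_mem_uIcc hm))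
      (vertical right_mem_uIcc (uIcc_subset_uIcc hm right_mem_uIcc)),
    ← intervalIntegral.integral_add_adjacent_intervals
      (vertical left_mem_uIcc (uIcc_subset_uIcc left_mem_uIcc hm))
      (vertical left_mem_uIcc (uIcc_subset_uIcc hm right_mem_uIcc))]
  simp only [smul_add]
  abel

theorem isConservativeOn_of_differentiableOn_diff_im_eq (hc : ContinuousOn f U)
    (hd : DifferentiableOn ℂ f (U \ {u | u.im = m})) :
    IsConservativeOn f U := by
  intro z w hzw
  rw [← add_eq_zero_iff_eq_neg]
  have vanish {z' w' : ℂ} (hsub : Rectangle z' w' ⊆ Rectangle z w) (hm : m ∉ uIoo z'.im w'.im) :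
      wedgeIntegral z' w' f + wedgeIntegral w' z' f = 0 :=
    wedgeIntegral_add_wedgeIntegral_eq_zero_of_notMem_uIoo (hc.mono (hsub.trans hzw))
      (hd.mono (sdiff_subset_sdiff_left (hsub.trans hzw))) hm
  by_cases hm : m ∈ uIoo z.im w.im
  · have hm' : m ∈ [[z.im, w.im]] := Ioo_subset_Icc_self hm
    have lower : Rectangle z ⟨w.re, m⟩ ⊆ Rectangle z w :=
      fun u hu => ⟨hu.1, uIcc_subset_uIcc left_mem_uIcc hm' hu.2⟩
    have upper : Rectangle ⟨z.re, m⟩ w ⊆ Rectangle z w :=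
      fun u hu => ⟨hu.1, uIcc_subset_uIcc hm' right_mem_uIcc hu.2⟩
    rw [wedgeIntegral_add_wedgeIntegral_eq_add_of_mem_uIcc (hc.mono hzw) hm',
      vanish lower right_notMem_uIoo, vanish upper left_notMem_uIoo, add_zero]
  · exact vanish subset_rfl hm

variable [CompleteSpace E] in
theorem differentiableOn_of_differentiableOn_diff_im_eq (hU : IsOpen U)
    (hc : ContinuousOn f U) (hd : DifferentiableOn ℂ f (U \ {u | u.im = m})) :
    DifferentiableOn ℂ f U :=
  (isConservativeOn_and_continuousOn_iff_isDifferentiableOn hU).1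
    ⟨isConservativeOn_of_differentiableOn_diff_im_eq hc hd, hc⟩

end Complex

theorem Int.floor_div_eq_iff_mem_Ico {β x : ℝ} (hβ : 0 < β) {k : ℤ} :
    ⌊x / β⌋ = k ↔ x ∈ Ico (k * β) ((k + 1) * β) := by
  rw [Int.floor_eq_iff, le_div_iff₀ hβ, div_lt_iff₀ hβ]
  rfl

section periodicExtension

variable {X : Type*} {β : ℝ} {F : ℂ → X}

noncomputable def periodicExtension (β : ℝ) (F : ℂ → X) (z : ℂ) : X :=
  F (z - ⌊z.im / β⌋ * β * I)

theorem periodicExtension_eq_of_mem (hβ : 0 < β) (hper : ∀ t : ℝ, F (t + β * I) = F t) {k : ℤ}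
    {z : ℂ} (hz : z.im ∈ Icc (k * β) ((k + 1) * β)) :
    periodicExtension β F z = F (z - k * β * I) := by
  rcases hz.2.lt_or_eq with hlt | heq
  · rw [periodicExtension, (Int.floor_div_eq_iff_mem_Ico hβ).2 ⟨hz.1, hlt⟩]
  · -- on the upper edge the floor is `k + 1`, and `hper` identifies the two translates
    have hfloor : ⌊z.im / β⌋ = k + 1 := by
      rw [heq, mul_div_cancel_right₀ _ hβ.ne']
      exact_mod_cast Int.floor_intCast (k + 1)
    have h₁ : z - ⌊z.im / β⌋ * β * I = z.re := by
      rw [hfloor]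
      apply Complex.ext <;> simp [heq]
    have h₂ : z - k * β * I = z.re + β * I := by
      apply Complex.ext <;> simp [heq]; ring
    rw [periodicExtension, h₁, h₂, hper]

theorem range_periodicExtension_subset (hβ : 0 < β) :
    range (periodicExtension β F) ⊆ F '' (im ⁻¹' Icc 0 β) := by
  rintro _ ⟨z, rfl⟩
  refine ⟨_, ?_, rfl⟩
  have h := (Int.floor_div_eq_iff_mem_Ico (x := z.im) hβ).1 rfl
  simp only [mem_preimage, mem_Icc]
  constructor <;> simp <;> linarith [h.1, h.2]

theorem continuousOn_periodicExtension_strip [TopologicalSpace X] (hβ : 0 < β)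
    (hcont : ContinuousOn F (im ⁻¹' Icc 0 β)) (hper : ∀ t : ℝ, F (t + β * I) = F t) (k : ℤ) :
    ContinuousOn (periodicExtension β F) (im ⁻¹' Icc (k * β) ((k + 1) * β)) := by
  refine ContinuousOn.congr ?_ fun z hz => periodicExtension_eq_of_mem hβ hper hz
  refine hcont.comp (by fun_prop) fun z hz => ?_
  simp only [mem_preimage, mem_Icc] at hz ⊢
  constructor <;> simp <;> linarith [hz.1, hz.2]

theorem continuous_periodicExtension [TopologicalSpace X] (hβ : 0 < β)
    (hcont : ContinuousOn F (im ⁻¹' Icc 0 β)) (hper : ∀ t : ℝ, F (t + β * I) = F t) :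
    Continuous (periodicExtension β F) := by
  refine continuous_iff_continuousAt.2 fun z => ?_
  set k := ⌊z.im / β⌋
  have hz := (Int.floor_div_eq_iff_mem_Ico (x := z.im) hβ).1 rfl
  have hglued :
      ContinuousOn (periodicExtension β F) (im ⁻¹' Icc ((k - 1) * β) ((k + 1) * β)) := by
    have hlower := continuousOn_periodicExtension_strip hβ hcont hper (k - 1)
    rw [Int.cast_sub, Int.cast_one, sub_add_cancel] at hlower
    rw [← Icc_union_Icc_eq_Icc (b := k * β) (by nlinarith) (by nlinarith), preimage_union]
    exact hlower.union_of_isClosed (continuousOn_periodicExtension_strip hβ hcont hper k)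
      (isClosed_Icc.preimage continuous_im) (isClosed_Icc.preimage continuous_im)
  refine hglued.continuousAt (Filter.mem_of_superset ?_ (preimage_mono Ioo_subset_Icc_self))
  exact (isOpen_Ioo.preimage continuous_im).mem_nhds ⟨by nlinarith [hz.1], hz.2⟩

theorem differentiableOn_periodicExtension_strip [NormedAddCommGroup X] [NormedSpace ℂ X]
    (hβ : 0 < β) (hholo : DifferentiableOn ℂ F (im ⁻¹' Ioo 0 β))
    (hper : ∀ t : ℝ, F (t + β * I) = F t) (k : ℤ) :
    DifferentiableOn ℂ (periodicExtension β F) (im ⁻¹' Ioo (k * β) ((k + 1) * β)) := by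
  refine DifferentiableOn.congr ?_
    fun z hz => periodicExtension_eq_of_mem hβ hper (Ioo_subset_Icc_self hz)
  refine hholo.comp (by fun_prop) fun z hz => ?_
  simp only [mem_preimage, mem_Ioo] at hz ⊢
  constructor <;> simp <;> linarith [hz.1, hz.2]

theorem differentiable_periodicExtension [NormedAddCommGroup X] [NormedSpace ℂ X]
    [CompleteSpace X] (hβ : 0 < β) (hcont : ContinuousOn F (im ⁻¹' Icc 0 β))
    (hholo : DifferentiableOn ℂ F (im ⁻¹' Ioo 0 β)) (hper : ∀ t : ℝ, F (t + β * I) = F t) :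
    Differentiable ℂ (periodicExtension β F) := by
  intro z
  set k := ⌊z.im / β⌋
  have hz := (Int.floor_div_eq_iff_mem_Ico (x := z.im) hβ).1 rfl
  have hU : IsOpen (im ⁻¹' Ioo ((k - 1) * β) ((k + 1) * β)) := isOpen_Ioo.preimage continuous_im
  have hoff : DifferentiableOn ℂ (periodicExtension β F)
      (im ⁻¹' Ioo ((k - 1) * β) ((k + 1) * β) \ {u | u.im = k * β}) := by
    have hlower := differentiableOn_periodicExtension_strip hβ hholo hper (k - 1)
    rw [Int.cast_sub, Int.cast_one, sub_add_cancel] at hlower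
    refine (hlower.union_of_isOpen (differentiableOn_periodicExtension_strip hβ hholo hper k)
      (isOpen_Ioo.preimage continuous_im) (isOpen_Ioo.preimage continuous_im)).mono ?_
    rintro u ⟨⟨hu₁, hu₂⟩, hne : u.im ≠ k * β⟩
    rcases hne.lt_or_gt with hlt | hgt
    exacts [Or.inl ⟨hu₁, hlt⟩, Or.inr ⟨hgt, hu₂⟩]
  refine (differentiableOn_of_differentiableOn_diff_im_eq hU
    (continuous_periodicExtension hβ hcont hper).continuousOn hoff).differentiableAt ?_
  exact hU.mem_nhds ⟨by nlinarith [hz.1], hz.2⟩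

end periodicExtension

/-- A function bounded and continuous on the closed strip `0 ≤ Im z ≤ β`, holomorphic on the
open strip, and periodic on the boundary (`F(t + iβ) = F(t)` for real `t`) is constant on the
closed strip. -/
theorem strip_periodic_boundary_constant (β : ℝ) (hβ : 0 < β) (F : ℂ → ℂ)
    (hbdd : ∃ C : ℝ, ∀ z : ℂ, 0 ≤ z.im → z.im ≤ β → ‖F z‖ ≤ C)
    (hcont : ContinuousOn F {z : ℂ | 0 ≤ z.im ∧ z.im ≤ β})
    (hholo : DifferentiableOn ℂ F {z : ℂ | 0 < z.im ∧ z.im < β})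
    (hper : ∀ t : ℝ, F ((t : ℂ) + (β : ℂ) * Complex.I) = F (t : ℂ)) :
    ∃ c : ℂ, ∀ z : ℂ, 0 ≤ z.im → z.im ≤ β → F z = c := by
  obtain ⟨C, hC⟩ := hbdd
  have hbounded : Bornology.IsBounded (range (periodicExtension β F)) := by
    refine (isBounded_iff_forall_norm_le.2 ⟨C, ?_⟩).subset (range_periodicExtension_subset hβ)
    rintro _ ⟨z, hz, rfl⟩
    exact hC z hz.1 hz.2
  refine ⟨periodicExtension β F 0, fun z hz₀ hzβ => ?_⟩
  have hz : periodicExtension β F z = F z := by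
    simpa using periodicExtension_eq_of_mem hβ hper (k := 0) (by simpa using ⟨hz₀, hzβ⟩)
  rw [← hz]
  exact (differentiable_periodicExtension hβ hcont hholo hper).apply_eq_apply_of_bounded
    hbounded z 0
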